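/- arXiv:0805.4665 — 2 statements merged into one kernel-verified Lean document; each statement's English description precedes it below -/
import Mathlib

section
/- If (P,Q) ∈ R, (P',Q') ∈ R, P ⪯ P', and there exist contexts φ and ψ such that for all (A,B) ∈ R we have B ⪯ φ[A], A ⪯ ψ[B], and φ[ψ[B]] ⪯ B, then Q ⪯ Q'. (Proof of security via cancelling contexts.) -/
theorem security_via_cancelling_contexts_general {Proc : Type*} [Preorder Proc]
    (R : Proc → Proc → Prop) (φ ψ : Proc → Proc)
    (hφ : Monotone φ)
    (h1 : ∀ A B, R A B → B ≤ φ A)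
    (h2 : ∀ A B, R A B → A ≤ ψ B)
    (h3 : ∀ A B, R A B → φ (ψ B) ≤ B)
    (P Q P' Q' : Proc) (hPQ : R P Q) (hP'Q' : R P' Q') (hPP' : P ≤ P') :
    Q ≤ Q' :=
  calc Q ≤ φ P := h1 P Q hPQ
    _ ≤ φ (ψ Q') := hφ (hPP'.trans (h2 P' Q' hP'Q'))
    _ ≤ Q' := h3 P' Q' hP'Q'

/-- Proof of security via cancelling contexts. -/
theorem security_via_cancelling_contexts {Proc : Type*} [Preorder Proc]
    (R : Proc → Proc → Prop) (φ ψ : Proc → Proc)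
    (hφ : Monotone φ) (hψ : Monotone ψ)
    (h1 : ∀ A B, R A B → B ≤ φ A)
    (h2 : ∀ A B, R A B → A ≤ ψ B)
    (h3 : ∀ A B, R A B → φ (ψ B) ≤ B)
    (P Q P' Q' : Proc) (hPQ : R P Q) (hP'Q' : R P' Q') (hPP' : P ≤ P') :
    Q ≤ Q' :=
  security_via_cancelling_contexts_general R φ ψ hφ h1 h2 h3 P Q P' Q' hPQ hP'Q' hPP'
end

section
/- Suppose there exist contexts φ and ψ such that for all (P,Q) ∈ R: Q ⪯ φ[P], P ⪯ ψ[Q], φ[ψ[Q]] ⪯ Q, and additionally ψ[φ[P]] ⪯ P. Then R is fully abstract: it satisfies both Preservation and Reflection. -/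
theorem Monotone.le_of_le_apply_of_apply_comp_le {α : Type*} [Preorder α] {φ ψ : α → α}
    (hφ : Monotone φ) {P Q P' Q' : α} (hQ : Q ≤ φ P) (hP' : P' ≤ ψ Q')
    (hQ' : φ (ψ Q') ≤ Q') (hPP' : P ≤ P') : Q ≤ Q' :=
  calc Q ≤ φ P := hQ
    _ ≤ φ (ψ Q') := hφ (hPP'.trans hP')
    _ ≤ Q' := hQ'

/-- Cancelling contexts in both directions yield full abstraction. -/
theorem full_abstraction_via_cancelling_contexts {Proc : Type*} [Preorder Proc]
    (R : Proc → Proc → Prop) (φ ψ : Proc → Proc)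
    (hφ : Monotone φ) (hψ : Monotone ψ)
    (h1 : ∀ P Q, R P Q → Q ≤ φ P)
    (h2 : ∀ P Q, R P Q → P ≤ ψ Q)
    (h3 : ∀ P Q, R P Q → φ (ψ Q) ≤ Q)
    (h4 : ∀ P Q, R P Q → ψ (φ P) ≤ P) :
    (∀ P Q P' Q', R P Q → R P' Q' → P ≤ P' → Q ≤ Q') ∧
    (∀ P Q P' Q', R P Q → R P' Q' → Q ≤ Q' → P ≤ P') :=
  ⟨fun P Q P' Q' h h' ↦
      hφ.le_of_le_apply_of_apply_comp_le (h1 P Q h) (h2 P' Q' h') (h3 P' Q' h'),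
    fun P Q P' Q' h h' ↦
      hψ.le_of_le_apply_of_apply_comp_le (h2 P Q h) (h1 P' Q' h') (h4 P' Q' h')⟩
end
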